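/- arXiv:2112.06380 — 2 statements merged into one kernel-verified Lean document; each statement's English description precedes it below -/
import Mathlib

section
/- There is a universal constant C such that the following holds. Let M(φ, id) be a Mallows model on n elements with 0 ≤ φ < 1, and let x, y, z ∈ [n] satisfy x < y < z and z − y ≤ min(y, 1/(1 − φ)). Then for every integer s with 1 ≤ s < y, the difference between the conditional probability over π ~ M(φ, id) that π^{-1}(x) > π^{-1}(z) given that π_{id:y}^{-1}(x) = s, and the conditional probability that π^{-1}(x) > π^{-1}(z) given that π_{id:y}^{-1}(x) = s + 1, has absolute value at most C·max(1/z, 1 − φ). -/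
/-!
A Mallows permutation with identity centre is built by inserting `0, 1, …, n - 1` one after the
other, the new largest element `k` landing with `j` entries after it with probability proportional
to `φ ^ j`. The relative position of `x` among the elements `≤ y` is fixed by the first insertions;
each later element `< z` shifts the position of `x` by one when it lands at or before it, `z` ends
up before `x` iff it lands at or before the current position of `x`, and larger elements do not
matter. So both conditional probabilities are values at consecutive points of one function, obtained
by averaging a step function over `z - y` insertions.

Averaging over one insertion into a permutation of size `k` turns a nondecreasing function with
increments `≤ c` into one with increments `≤ c (1 + 1 / [k + 1]_φ)`, where
`[m]_φ = 1 + φ + ⋯ + φ ^ (m - 1)`. Starting from `1 / [z + 1]_φ`, the increment is at most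
`exp (∑ 1 / [m]_φ) / [z + 1]_φ`, and since `1 / [m]_φ ≤ 2 max (1 / m, 1 - φ)` and
`z - y ≤ min (y, 1 / (1 - φ))`, the exponent is at most `2`.
-/

open scoped Classical
open Finset

namespace Mallows

/-- Kendall-tau distance between two permutations of `Fin n`: the number of pairs of
elements whose relative order differs in the two permutations. -/
noncomputable def dKT {n : ℕ} (π σ : Equiv.Perm (Fin n)) : ℕ :=
  (Finset.univ.filter (fun p : Fin n × Fin n =>
    p.1 < p.2 ∧ ¬((π.symm p.1 < π.symm p.2) ↔ (σ.symm p.1 < σ.symm p.2)))).card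

/-- Probability mass function of the Mallows model `M(φ, π₀)`. -/
noncomputable def mallowsPMF {n : ℕ} (φ : ℝ) (π₀ π : Equiv.Perm (Fin n)) : ℝ :=
  φ ^ dKT π π₀ / ∑ σ : Equiv.Perm (Fin n), φ ^ dKT σ π₀

/-- Expectation of `f` under `M(φ, π₀)`. -/
noncomputable def mExp {n : ℕ} (φ : ℝ) (π₀ : Equiv.Perm (Fin n))
    (f : Equiv.Perm (Fin n) → ℝ) : ℝ :=
  ∑ π : Equiv.Perm (Fin n), mallowsPMF φ π₀ π * f π

/-- Probability of the event `A` under `M(φ, π₀)`. -/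
noncomputable def mProb {n : ℕ} (φ : ℝ) (π₀ : Equiv.Perm (Fin n))
    (A : Equiv.Perm (Fin n) → Prop) : ℝ :=
  ∑ π : Equiv.Perm (Fin n), if A π then mallowsPMF φ π₀ π else 0

/-- Total variation distance between two pmfs on permutations of `Fin n`. -/
noncomputable def tvDist {n : ℕ} (p q : Equiv.Perm (Fin n) → ℝ) : ℝ :=
  (∑ π : Equiv.Perm (Fin n), |p π - q π|) / 2

/-- Kullback–Leibler divergence between two pmfs on permutations of `Fin n`. -/
noncomputable def klDiv {n : ℕ} (p q : Equiv.Perm (Fin n) → ℝ) : ℝ :=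
  ∑ π : Equiv.Perm (Fin n), p π * Real.log (p π / q π)

/-- Position vector of a permutation: entry `i` is the position `π⁻¹ i` of element `i`. -/
noncomputable def posVec {n : ℕ} (π : Equiv.Perm (Fin n)) : EuclideanSpace ℝ (Fin n) :=
  WithLp.toLp 2 (fun i => ((π.symm i).1 : ℝ))

/-- Front adjustment vector of `π` with respect to `π̂`: entry `i` counts the elements `j`
with `π̂⁻¹ j < π̂⁻¹ i` and `π⁻¹ j > π⁻¹ i`. -/
noncomputable def leftAdj {n : ℕ} (πh π : Equiv.Perm (Fin n)) : EuclideanSpace ℝ (Fin n) :=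
  WithLp.toLp 2 (fun i => ((Finset.univ.filter (fun j : Fin n =>
    πh.symm j < πh.symm i ∧ π.symm i < π.symm j)).card : ℝ))

/-- Back adjustment vector of `π` with respect to `π̂`: entry `i` counts the elements `j`
with `π̂⁻¹ j > π̂⁻¹ i` and `π⁻¹ j < π⁻¹ i`. -/
noncomputable def rightAdj {n : ℕ} (πh π : Equiv.Perm (Fin n)) : EuclideanSpace ℝ (Fin n) :=
  WithLp.toLp 2 (fun i => ((Finset.univ.filter (fun j : Fin n =>
    πh.symm i < πh.symm j ∧ π.symm j < π.symm i)).card : ℝ))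

/-- 0-indexed position of element `j` within the permutation induced by `π` on the first
`t` elements (those with value `< t`). -/
noncomputable def relPos {n : ℕ} (π : Equiv.Perm (Fin n)) (t : ℕ) (j : Fin n) : ℕ :=
  (Finset.univ.filter (fun i : Fin n => i.1 < t ∧ π.symm i < π.symm j)).card

/-- Conditional probability of `A` given `B`, under `M(φ, π₀)`. -/
noncomputable def mCondProb {n : ℕ} (φ : ℝ) (π₀ : Equiv.Perm (Fin n))
    (A B : Equiv.Perm (Fin n) → Prop) : ℝ :=
  (∑ π : Equiv.Perm (Fin n), if A π ∧ B π then mallowsPMF φ π₀ π else 0) / mProb φ π₀ B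

open Equiv

lemma val_succAbove {k : ℕ} (p : Fin (k + 1)) (i : Fin k) :
    (p.succAbove i : ℕ) = if i.1 < p.1 then i.1 else i.1 + 1 := by
  unfold Fin.succAbove
  split_ifs <;> simp_all [Fin.lt_def]

-- The position map `(insertLast σ p).symm` sends `Fin.last k` to `p` and is `σ.symm` followed by
-- `p.succAbove` on the other elements.
noncomputable def insertLast {k : ℕ} (σ : Perm (Fin k)) (p : Fin (k + 1)) :
    Perm (Fin (k + 1)) :=
  ((finSuccEquiv' (Fin.last k)).trans ((optionCongr σ.symm).trans (finSuccEquiv' p).symm)).symm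

section Insertion

variable {k : ℕ} (σ : Perm (Fin k)) (p : Fin (k + 1))

@[simp] lemma insertLast_symm_last : (insertLast σ p).symm (Fin.last k) = p := by
  simp only [insertLast, symm_symm, trans_apply, finSuccEquiv'_at, optionCongr_apply,
    Option.map_none, finSuccEquiv'_symm_none]

@[simp] lemma insertLast_symm_castSucc (j : Fin k) :
    (insertLast σ p).symm j.castSucc = p.succAbove (σ.symm j) := by
  rw [← Fin.succAbove_last]
  simp only [insertLast, symm_symm, trans_apply, finSuccEquiv'_succAbove, optionCongr_apply,
    Option.map_some, finSuccEquiv'_symm_some]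

lemma insertLast_bijective :
    Function.Bijective (fun q : Perm (Fin k) × Fin (k + 1) => insertLast q.1 q.2) := by
  refine (Fintype.bijective_iff_injective_and_card _).2 ⟨?_, ?_⟩
  · rintro ⟨σ, p⟩ ⟨σ', p'⟩ h
    have hp : p = p' := by
      simpa using congrArg (fun π : Perm (Fin (k + 1)) => π.symm (Fin.last k)) h
    subst hp
    have hσ : σ.symm = σ'.symm := Equiv.ext fun j => by
      simpa using congrArg (fun π : Perm (Fin (k + 1)) => π.symm j.castSucc) h
    simp [Equiv.symm_bijective.injective hσ]
  · simp [Fintype.card_perm, Nat.factorial_succ, mul_comm]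

lemma sum_perm_succ {M : Type*} [AddCommMonoid M] (f : Perm (Fin (k + 1)) → M) :
    ∑ π, f π = ∑ σ : Perm (Fin k), ∑ p, f (insertLast σ p) := by
  rw [← Fintype.sum_prod_type']
  exact (Fintype.sum_bijective _ insertLast_bijective _ f fun _ => rfl).symm

end Insertion

lemma dKT_one_eq_sum {n : ℕ} (π : Perm (Fin n)) :
    dKT π 1 = ∑ i, #{j | i < j ∧ π.symm j < π.symm i} := by
  rw [dKT, card_filter, Fintype.sum_prod_type]
  refine sum_congr rfl fun i _ => ?_
  rw [card_filter]
  refine sum_congr rfl fun j _ => if_congr ?_ rfl rfl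
  have one_symm (i : Fin n) : (1 : Perm (Fin n)).symm i = i := rfl
  simp only [one_symm]
  refine and_congr_right fun hij => ?_
  simp only [hij, iff_true, not_lt]
  exact ⟨fun h => h.lt_of_ne fun e => hij.ne (π.symm.injective e).symm, le_of_lt⟩

lemma card_filter_le_symm {k : ℕ} (σ : Perm (Fin k)) (m : ℕ) :
    #{i | m ≤ (σ.symm i : ℕ)} = k - m := by
  rw [card_filter, Equiv.sum_comp σ.symm (fun v : Fin k => if m ≤ (v : ℕ) then 1 else 0),
    Fin.sum_univ_eq_sum_range (fun v => if m ≤ v then 1 else 0), ← card_filter]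
  have : {v ∈ range k | m ≤ v} = Ico m k := by ext; simp [and_comm]
  rw [this, Nat.card_Ico]

lemma dKT_insertLast {k : ℕ} (σ : Perm (Fin k)) (p : Fin (k + 1)) :
    dKT (insertLast σ p) 1 = dKT σ 1 + (k - p) := by
  have row (i : Fin k) :
      #{j | i.castSucc < j ∧ (insertLast σ p).symm j < (insertLast σ p).symm i.castSucc} =
        #{j | i < j ∧ σ.symm j < σ.symm i} + if (p : ℕ) ≤ σ.symm i then 1 else 0 := by
    rw [card_filter, card_filter, Fin.sum_univ_castSucc]
    congr 1
    · refine sum_congr rfl fun j _ => if_congr ?_ rfl rfl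
      simp [Fin.succAbove_lt_succAbove_iff]
    · refine if_congr ?_ rfl rfl
      rw [insertLast_symm_last, insertLast_symm_castSucc]
      simp only [Fin.lt_def, val_succAbove, Fin.val_castSucc, Fin.val_last]
      split_ifs <;> omega
  rw [dKT_one_eq_sum, Fin.sum_univ_castSucc, sum_congr rfl fun i _ => row i, sum_add_distrib,
    ← card_filter, card_filter_le_symm, dKT_one_eq_sum]
  simp [not_lt.2 (Fin.le_last _)]

/-- Position of an element given as a natural number, so that a statistic can be stated uniformly
in the size `k` (junk value `0` when `a ≥ k`). -/
noncomputable def posNat {k : ℕ} (σ : Perm (Fin k)) (a : ℕ) : ℕ :=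
  if h : a < k then σ.symm ⟨a, h⟩ else 0

noncomputable def relPosNat {k : ℕ} (σ : Perm (Fin k)) (t a : ℕ) : ℕ :=
  #{i ∈ range t | posNat σ i < posNat σ a}

section Positions

variable {k : ℕ} (σ : Perm (Fin k))

@[simp] lemma posNat_val (a : Fin k) : posNat σ a = σ.symm a := by
  simp [posNat]

lemma relPos_eq_relPosNat {t : ℕ} (ht : t ≤ k) (x : Fin k) :
    relPos σ t x = relPosNat σ t x := by
  refine card_bij (fun i _ => i.1) (fun i hi => ?_) (fun _ _ _ _ => Fin.ext) fun b hb => ?_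
  · simp only [mem_filter, mem_univ, true_and] at hi
    simp only [mem_filter, mem_range, posNat_val]
    exact hi
  · simp only [mem_filter, mem_range] at hb
    refine ⟨⟨b, by omega⟩, ?_, rfl⟩
    simp only [mem_filter, mem_univ, true_and]
    have e : posNat σ b = σ.symm ⟨b, by omega⟩ := posNat_val σ ⟨b, _⟩
    rw [e, posNat_val] at hb
    exact ⟨hb.1, hb.2⟩

lemma relPosNat_size (x : Fin k) : relPosNat σ k x = σ.symm x := by
  rw [← relPos_eq_relPosNat σ le_rfl, relPos]
  simp only [Fin.is_lt, true_and]
  rw [← Fin.card_Iio (σ.symm x), ← card_map σ.symm.toEmbedding]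
  congr 1
  ext v
  simp

variable (p : Fin (k + 1))

lemma posNat_insertLast_self : posNat (insertLast σ p) k = p := by
  simpa using posNat_val (insertLast σ p) (Fin.last k)

lemma posNat_insertLast_of_lt {a : ℕ} (ha : a < k) :
    posNat (insertLast σ p) a = posNat σ a + if (p : ℕ) ≤ posNat σ a then 1 else 0 := by
  have e₁ : posNat (insertLast σ p) a = (insertLast σ p).symm (Fin.castSucc ⟨a, ha⟩) :=
    posNat_val _ (Fin.castSucc ⟨a, ha⟩)
  have e₂ : posNat σ a = σ.symm ⟨a, ha⟩ := posNat_val σ ⟨a, ha⟩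
  rw [e₁, e₂, insertLast_symm_castSucc, val_succAbove]
  split_ifs <;> omega

lemma posNat_insertLast_lt_iff {a b : ℕ} (ha : a < k) (hb : b < k) :
    posNat (insertLast σ p) a < posNat (insertLast σ p) b ↔ posNat σ a < posNat σ b := by
  rw [posNat_insertLast_of_lt σ p ha, posNat_insertLast_of_lt σ p hb]
  split_ifs <;> omega

lemma relPosNat_insertLast {t a : ℕ} (ht : t ≤ k) (ha : a < k) :
    relPosNat (insertLast σ p) t a = relPosNat σ t a := by
  unfold relPosNat
  congr 1
  refine filter_congr fun i hi => posNat_insertLast_lt_iff σ p ?_ ha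
  have := mem_range.1 hi
  omega

end Positions

noncomputable def mallowsSum {k : ℕ} (φ : ℝ) (F : Perm (Fin k) → ℝ) : ℝ :=
  ∑ σ, φ ^ dKT σ 1 * F σ

noncomputable def geomSum (φ : ℝ) (m : ℕ) : ℝ :=
  ∑ j ∈ range m, φ ^ j

section WeightedSums

variable {φ : ℝ}

lemma geomSum_pos (hφ : 0 ≤ φ) {m : ℕ} (hm : 1 ≤ m) : 0 < geomSum φ m :=
  sum_pos' (fun j _ => pow_nonneg hφ j) ⟨0, mem_range.2 hm, by simp⟩

lemma mallowsSum_pos_of_nonneg (hφ : 0 < φ) {k : ℕ} {F : Perm (Fin k) → ℝ} (hF : 0 ≤ F)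
    {σ : Perm (Fin k)} (hσ : 0 < F σ) : 0 < mallowsSum φ F :=
  sum_pos' (fun τ _ => mul_nonneg (pow_nonneg hφ.le _) (hF τ))
    ⟨σ, mem_univ σ, mul_pos (pow_pos hφ _) hσ⟩

lemma mCondProb_one_eq_div (hφ : 0 ≤ φ) {n : ℕ} {A B : Perm (Fin n) → Prop} {F G : Perm (Fin n) → ℝ}
    (hF : ∀ π, F π = if A π ∧ B π then 1 else 0) (hG : ∀ π, G π = if B π then 1 else 0) :
    mCondProb φ 1 A B = mallowsSum φ F / mallowsSum φ G := by
  have hS : (∑ σ : Perm (Fin n), φ ^ dKT σ 1) ≠ 0 :=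
    (sum_pos' (fun σ _ => pow_nonneg hφ _) ⟨1, mem_univ _, by simp [dKT]⟩).ne'
  have pmf_sum (P : Perm (Fin n) → Prop) [DecidablePred P] (H : Perm (Fin n) → ℝ)
      (hH : ∀ π, H π = if P π then 1 else 0) :
      (∑ π, if P π then mallowsPMF φ 1 π else 0) =
        mallowsSum φ H / ∑ σ : Perm (Fin n), φ ^ dKT σ 1 := by
    rw [mallowsSum, sum_div]
    refine sum_congr rfl fun π _ => ?_
    rw [hH]
    split_ifs <;> simp [mallowsPMF]
  rw [mCondProb, mProb, pmf_sum (fun π => A π ∧ B π) F hF, pmf_sum B G hG,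
    div_div_div_cancel_right₀ hS]

lemma mallowsSum_nonneg (hφ : 0 ≤ φ) {k : ℕ} {F : Perm (Fin k) → ℝ} (hF : 0 ≤ F) :
    0 ≤ mallowsSum φ F :=
  sum_nonneg fun σ _ => mul_nonneg (pow_nonneg hφ _) (hF σ)

lemma mallowsSum_mono (hφ : 0 ≤ φ) {k : ℕ} {F G : Perm (Fin k) → ℝ} (h : F ≤ G) :
    mallowsSum φ F ≤ mallowsSum φ G :=
  sum_le_sum fun σ _ => mul_le_mul_of_nonneg_left (h σ) (pow_nonneg hφ _)

lemma mCondProb_mem_Icc (hφ : 0 ≤ φ) {n : ℕ} (A B : Perm (Fin n) → Prop) :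
    mCondProb φ 1 A B ∈ Set.Icc 0 1 := by
  rw [mCondProb_one_eq_div hφ (F := fun π => if A π ∧ B π then 1 else 0)
    (G := fun π => if B π then 1 else 0) (fun _ => rfl) (fun _ => rfl)]
  have hF : 0 ≤ fun π => if A π ∧ B π then (1 : ℝ) else 0 := fun π => by
    dsimp only; split_ifs <;> norm_num
  have hFG : (fun π => if A π ∧ B π then (1 : ℝ) else 0) ≤ fun π => if B π then 1 else 0 :=
    fun π => by dsimp only; split_ifs <;> simp_all
  exact ⟨div_nonneg (mallowsSum_nonneg hφ hF) (mallowsSum_nonneg hφ (hF.trans hFG)),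
    div_le_one_of_le₀ (mallowsSum_mono hφ hFG) (mallowsSum_nonneg hφ (hF.trans hFG))⟩

lemma mallowsSum_succ {k : ℕ} (F : Perm (Fin (k + 1)) → ℝ) :
    mallowsSum φ F =
      mallowsSum φ (fun σ => ∑ p : Fin (k + 1), φ ^ (k - p) * F (insertLast σ p)) := by
  simp only [mallowsSum, sum_perm_succ, dKT_insertLast, pow_add, mul_sum, mul_assoc]

lemma mallowsSum_eq_prod_mul (F : ∀ k, Perm (Fin k) → ℝ) {a b : ℕ} (hab : a ≤ b)
    (hF : ∀ k, a ≤ k → k < b → ∀ σ : Perm (Fin k),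
      ∑ p : Fin (k + 1), φ ^ (k - p) * F (k + 1) (insertLast σ p) = geomSum φ (k + 1) * F k σ) :
    mallowsSum φ (F b) = (∏ t ∈ Ioc a b, geomSum φ t) * mallowsSum φ (F a) := by
  induction b, hab using Nat.le_induction with
  | base => simp
  | succ b hab ih =>
    rw [mallowsSum_succ, prod_Ioc_succ_top hab, mul_comm _ (geomSum φ _), mul_assoc,
      ← ih fun k hk hkb => hF k hk (by omega)]
    simp only [mallowsSum, hF b hab (by omega), mul_sum]
    exact sum_congr rfl fun σ _ => by ring

lemma sum_insertLast_shift (k q : ℕ) (g : ℕ → ℝ) :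
    ∑ p : Fin (k + 1), φ ^ (k - p) * g (if (p : ℕ) ≤ q then 1 else 0) =
      ∑ j ∈ range (k + 1), φ ^ j * g (if k ≤ q + j then 1 else 0) := by
  rw [Fin.sum_univ_eq_sum_range (fun p => φ ^ (k - p) * g (if p ≤ q then 1 else 0)),
    ← sum_range_reflect]
  refine sum_congr rfl fun j hj => ?_
  have hj := mem_range.1 hj
  have e : k + 1 - 1 - j = k - j := by omega
  rw [e, Nat.sub_sub_self (by omega)]
  congr 3
  exact propext (by omega)

lemma sum_insertLast_const {k : ℕ} (c : ℝ) :
    ∑ p : Fin (k + 1), φ ^ (k - p) * c = geomSum φ (k + 1) * c := by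
  simpa [geomSum, sum_mul] using sum_insertLast_shift (φ := φ) k 0 fun _ => c

end WeightedSums

/-- The largest element is inserted into a permutation of size `k` with `j` entries after it, at
weight `φ ^ j`; it lands at or before position `p`, shifting that entry, iff `k ≤ p + j`. -/
noncomputable def shiftAvg (φ : ℝ) (k : ℕ) (f : ℕ → ℝ) (p : ℕ) : ℝ :=
  (∑ j ∈ range (k + 1), φ ^ j * f (p + if k ≤ p + j then 1 else 0)) / geomSum φ (k + 1)

noncomputable def shiftProb (φ : ℝ) (k p : ℕ) : ℝ :=
  (∑ j ∈ range (k + 1), φ ^ j * if k ≤ p + j then 1 else 0) / geomSum φ (k + 1)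

/-- Probability that `z` ends up before the entry at position `p` of a permutation of size `z - d`
once `z - d, …, z` have been inserted. -/
noncomputable def invProb (φ : ℝ) (z : ℕ) : ℕ → ℕ → ℝ
  | 0 => shiftProb φ z
  | d + 1 => shiftAvg φ (z - (d + 1)) (invProb φ z d)

def IncrBounded (f : ℕ → ℝ) (c : ℝ) : Prop :=
  ∀ p, f p ≤ f (p + 1) ∧ f (p + 1) ≤ f p + c

lemma IncrBounded.nonneg {f : ℕ → ℝ} {c : ℝ} (hf : IncrBounded f c) : 0 ≤ c := by
  linarith [hf 0]

lemma IncrBounded.mono {f : ℕ → ℝ} {c c' : ℝ} (hf : IncrBounded f c) (hc : c ≤ c') :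
    IncrBounded f c' :=
  fun p => ⟨(hf p).1, (hf p).2.trans (by linarith)⟩

section Increments

variable {φ : ℝ} (hφ₀ : 0 ≤ φ) (hφ₁ : φ ≤ 1)
include hφ₀ hφ₁

lemma sum_pow_mul_ite_eq_le (k q m : ℕ) :
    ∑ j ∈ range m, φ ^ j * (if k = q + j then 1 else 0) ≤ 1 :=
  calc ∑ j ∈ range m, φ ^ j * (if k = q + j then 1 else 0)
      ≤ ∑ j ∈ range m, if k - q = j then 1 else 0 := by
        refine sum_le_sum fun j _ => ?_
        by_cases h : k = q + j
        · rw [if_pos h, if_pos (by omega), mul_one]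
          exact pow_le_one₀ hφ₀ hφ₁
        · rw [if_neg h, mul_zero]
          split_ifs <;> norm_num
    _ ≤ 1 := by
        rw [sum_ite_eq]
        split_ifs <;> norm_num

lemma shiftProb_incrBounded (k : ℕ) :
    IncrBounded (shiftProb φ k) (1 / geomSum φ (k + 1)) := by
  intro p
  have hG := geomSum_pos hφ₀ (Nat.le_add_left 1 k)
  have step : shiftProb φ k (p + 1) = shiftProb φ k p +
      (∑ j ∈ range (k + 1), φ ^ j * if k = p + 1 + j then 1 else 0) / geomSum φ (k + 1) := by
    rw [shiftProb, shiftProb, ← add_div, ← sum_add_distrib]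
    congr 1
    refine sum_congr rfl fun j _ => ?_
    split_ifs <;> first | omega | ring
  have hsum := sum_pow_mul_ite_eq_le hφ₀ hφ₁ k (p + 1) (k + 1)
  have hnn : 0 ≤ ∑ j ∈ range (k + 1), φ ^ j * if k = p + 1 + j then 1 else 0 :=
    sum_nonneg fun j _ => mul_nonneg (pow_nonneg hφ₀ j) (by split_ifs <;> norm_num)
  rw [step]
  exact ⟨le_add_of_nonneg_right (div_nonneg hnn hG.le),
    add_le_add_right (div_le_div_of_nonneg_right hsum hG.le) _⟩

/-- Two entries one apart are pushed two apart only when the new element lands between them, which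
has weight at most `1` out of `geomSum φ (k + 1)`. -/
lemma IncrBounded.shiftAvg {f : ℕ → ℝ} {c : ℝ} (hf : IncrBounded f c) (k : ℕ) :
    IncrBounded (shiftAvg φ k f) (c * (1 + 1 / geomSum φ (k + 1))) := by
  intro p
  have hG := geomSum_pos hφ₀ (Nat.le_add_left 1 k)
  have hc := hf.nonneg
  have term (j : ℕ) :
      f (p + if k ≤ p + j then 1 else 0) ≤ f (p + 1 + if k ≤ p + 1 + j then 1 else 0) ∧
      f (p + 1 + if k ≤ p + 1 + j then 1 else 0) ≤
        f (p + if k ≤ p + j then 1 else 0) + c * (1 + if k = p + 1 + j then 1 else 0) := by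
    obtain ⟨h₁, h₂⟩ := hf p
    obtain ⟨h₃, h₄⟩ := hf (p + 1)
    split_ifs <;> first | omega | (simp only [add_zero]; constructor <;> linarith)
  set G := geomSum φ (k + 1)
  set N₀ := ∑ j ∈ range (k + 1), φ ^ j * f (p + if k ≤ p + j then 1 else 0)
  set N₁ := ∑ j ∈ range (k + 1), φ ^ j * f (p + 1 + if k ≤ p + 1 + j then 1 else 0)
  have hmono : N₀ ≤ N₁ :=
    sum_le_sum fun j _ => mul_le_mul_of_nonneg_left (term j).1 (pow_nonneg hφ₀ j)
  have hincr : N₁ ≤ N₀ + c * G + c * 1 :=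
    calc N₁ ≤ ∑ j ∈ range (k + 1), φ ^ j *
          (f (p + if k ≤ p + j then 1 else 0) + c * (1 + if k = p + 1 + j then 1 else 0)) :=
          sum_le_sum fun j _ => mul_le_mul_of_nonneg_left (term j).2 (pow_nonneg hφ₀ j)
      _ = N₀ + c * G + c * ∑ j ∈ range (k + 1), φ ^ j * if k = p + 1 + j then 1 else 0 := by
          simp only [G, geomSum, N₀, mul_sum, ← sum_add_distrib]
          exact sum_congr rfl fun j _ => by ring
      _ ≤ N₀ + c * G + c * 1 := by
          gcongr
          exact sum_pow_mul_ite_eq_le hφ₀ hφ₁ k (p + 1) (k + 1)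
  refine ⟨div_le_div_of_nonneg_right hmono hG.le, ?_⟩
  calc N₁ / G ≤ (N₀ + c * G + c * 1) / G := div_le_div_of_nonneg_right hincr hG.le
    _ = N₀ / G + c * (1 + 1 / G) := by field_simp; ring

end Increments

lemma invProb_incrBounded {φ : ℝ} (hφ₀ : 0 ≤ φ) (hφ₁ : φ ≤ 1) {z d : ℕ} (hd : d ≤ z) :
    IncrBounded (invProb φ z d)
      (1 / geomSum φ (z + 1) * Real.exp (∑ e ∈ range d, 1 / geomSum φ (z - e))) := by
  induction d with
  | zero => simpa [invProb] using shiftProb_incrBounded hφ₀ hφ₁ z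
  | succ d ih =>
    have h := (ih (by omega)).shiftAvg hφ₀ hφ₁ (z - (d + 1))
    rw [show z - (d + 1) + 1 = z - d by omega] at h
    refine h.mono ?_
    rw [sum_range_succ, Real.exp_add, ← mul_assoc]
    gcongr
    · exact (ih (by omega)).nonneg
    · linarith [Real.add_one_le_exp (1 / geomSum φ (z - d))]

section Bounds

variable {φ : ℝ} (hφ₀ : 0 ≤ φ) (hφ₁ : φ < 1)
include hφ₀ hφ₁

lemma one_div_geomSum_le {m : ℕ} (hm : 1 ≤ m) :
    1 / geomSum φ m ≤ 2 * max (1 / (m : ℝ)) (1 - φ) := by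
  have hG := geomSum_pos hφ₀ hm
  have hm' : (0 : ℝ) < m := by exact_mod_cast hm
  rw [div_le_iff₀ hG]
  rcases le_or_gt (φ ^ m) (1 / 2) with h | h
  · have hgeom : geomSum φ m * (1 - φ) = 1 - φ ^ m := geom_sum_mul_neg φ m
    calc (1 : ℝ) ≤ 2 * (1 - φ) * geomSum φ m := by linarith
      _ ≤ 2 * max (1 / (m : ℝ)) (1 - φ) * geomSum φ m := by gcongr; exact le_max_right _ _
  · have hlow : m * φ ^ m ≤ geomSum φ m := by
      calc (m : ℝ) * φ ^ m = ∑ _j ∈ range m, φ ^ m := by simp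
        _ ≤ geomSum φ m := sum_le_sum fun j hj =>
          pow_le_pow_of_le_one hφ₀ hφ₁.le (mem_range.1 hj).le
    calc (1 : ℝ) ≤ 2 * (1 / m) * geomSum φ m := by
          rw [show 2 * (1 / (m : ℝ)) * geomSum φ m = 2 * geomSum φ m / m by ring,
            le_div_iff₀ hm']
          nlinarith
      _ ≤ 2 * max (1 / (m : ℝ)) (1 - φ) * geomSum φ m := by gcongr; exact le_max_left _ _

lemma sum_one_div_geomSum_le {d z : ℕ} (hdz : 2 * d ≤ z) (hd : (d + 1) * (1 - φ) ≤ 1) :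
    ∑ e ∈ range d, 1 / geomSum φ (z - e) ≤ 2 := by
  have hterm (e : ℕ) (he : e ∈ range d) :
      1 / geomSum φ (z - e) ≤ 2 * max (1 / ((d : ℝ) + 1)) (1 - φ) := by
    have hmono : geomSum φ (d + 1) ≤ geomSum φ (z - e) :=
      sum_le_sum_of_subset_of_nonneg (range_subset_range.2 (by have := mem_range.1 he; omega))
        fun j _ _ => pow_nonneg hφ₀ j
    calc 1 / geomSum φ (z - e) ≤ 1 / geomSum φ (d + 1) :=
          one_div_le_one_div_of_le (geomSum_pos hφ₀ (by omega)) hmono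
      _ ≤ 2 * max (1 / ((d : ℝ) + 1)) (1 - φ) := by
          simpa using one_div_geomSum_le hφ₀ hφ₁ (Nat.le_add_left 1 d)
  calc ∑ e ∈ range d, 1 / geomSum φ (z - e) ≤ d * (2 * max (1 / ((d : ℝ) + 1)) (1 - φ)) := by
        simpa using sum_le_sum hterm
    _ = 2 * max (d / ((d : ℝ) + 1)) (d * (1 - φ)) := by
        rw [mul_left_comm, mul_max_of_nonneg _ _ (Nat.cast_nonneg d), mul_one_div]
    _ ≤ 2 := by
        have : (d : ℝ) / (d + 1) ≤ 1 := (div_le_one (by positivity)).2 (by linarith)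
        have : (d : ℝ) * (1 - φ) ≤ 1 := by nlinarith
        have := max_le ‹(d : ℝ) / (d + 1) ≤ 1› this
        linarith

end Bounds

lemma one_div_geomSum_mul_exp_le {φ : ℝ} (hφ₀ : 0 ≤ φ) (hφ₁ : φ < 1) {d z : ℕ} (hdz : 2 * d ≤ z)
    (hd : (d + 1) * (1 - φ) ≤ 1) :
    1 / geomSum φ (z + 1) * Real.exp (∑ e ∈ range d, 1 / geomSum φ (z - e)) ≤
      18 * max (1 / ((z : ℝ) + 1)) (1 - φ) := by
  have hexp : Real.exp (∑ e ∈ range d, 1 / geomSum φ (z - e)) ≤ 9 :=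
    calc Real.exp (∑ e ∈ range d, 1 / geomSum φ (z - e)) ≤ Real.exp 1 ^ 2 := by
          rw [← Real.exp_nat_mul]
          exact Real.exp_le_exp.2 (by simpa using sum_one_div_geomSum_le hφ₀ hφ₁ hdz hd)
      _ ≤ 9 := by nlinarith [Real.exp_one_lt_three, Real.exp_pos 1]
  have hG : 1 / geomSum φ (z + 1) ≤ 2 * max (1 / ((z : ℝ) + 1)) (1 - φ) := by
    simpa using one_div_geomSum_le hφ₀ hφ₁ (Nat.le_add_left 1 z)
  calc 1 / geomSum φ (z + 1) * Real.exp (∑ e ∈ range d, 1 / geomSum φ (z - e))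
      ≤ 2 * max (1 / ((z : ℝ) + 1)) (1 - φ) * 9 :=
        mul_le_mul hG hexp (Real.exp_pos _).le (by positivity)
    _ = 18 * max (1 / ((z : ℝ) + 1)) (1 - φ) := by ring

noncomputable def relPosIndicator (X Y r : ℕ) {k : ℕ} (σ : Perm (Fin k)) : ℝ :=
  if relPosNat σ Y X = r then 1 else 0

/-- For `k > z` the indicator of `z` before `X` together with `relPosIndicator`; for `k ≤ z` the
average of that indicator over the insertion of `k, …, z`. -/
noncomputable def invWeight (φ : ℝ) (X Y z r k : ℕ) (σ : Perm (Fin k)) : ℝ :=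
  if z < k then (if posNat σ z < posNat σ X then relPosIndicator X Y r σ else 0)
  else relPosIndicator X Y r σ * invProb φ z (z - k) (posNat σ X)

section ConditionalWeights

variable {φ : ℝ} {X Y z r k : ℕ}

lemma relPosIndicator_insertLast (hX : X < k) (hY : Y ≤ k) (σ : Perm (Fin k))
    (p : Fin (k + 1)) : relPosIndicator X Y r (insertLast σ p) = relPosIndicator X Y r σ := by
  rw [relPosIndicator, relPosNat_insertLast σ p hY hX, relPosIndicator]

lemma sum_insertLast_relPosIndicator (hX : X < k) (hY : Y ≤ k) (σ : Perm (Fin k)) :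
    ∑ p : Fin (k + 1), φ ^ (k - p) * relPosIndicator X Y r (insertLast σ p) =
      geomSum φ (k + 1) * relPosIndicator X Y r σ := by
  simp only [relPosIndicator_insertLast hX hY σ, sum_insertLast_const]

lemma sum_insertLast_invWeight (hφ : 0 ≤ φ) (hXY : X < Y) (hY : Y ≤ k) (σ : Perm (Fin k)) :
    ∑ p : Fin (k + 1), φ ^ (k - p) * invWeight φ X Y z r (k + 1) (insertLast σ p) =
      geomSum φ (k + 1) * invWeight φ X Y z r k σ := by
  have hX : X < k := by omega
  have hG : geomSum φ (k + 1) ≠ 0 := (geomSum_pos hφ (by omega)).ne'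
  have hind := relPosIndicator_insertLast (r := r) hX hY σ
  rcases lt_trichotomy z k with hzk | rfl | hkz
  · have h (p : Fin (k + 1)) :
        invWeight φ X Y z r (k + 1) (insertLast σ p) = invWeight φ X Y z r k σ := by
      simp only [invWeight, hzk, Nat.lt_succ_of_lt hzk, if_true,
        posNat_insertLast_lt_iff σ p hzk hX, hind]
    simp only [h, sum_insertLast_const]
  · have h (p : Fin (z + 1)) : invWeight φ X Y z r (z + 1) (insertLast σ p) =
        relPosIndicator X Y r σ * ((if (p : ℕ) ≤ posNat σ X then 1 else 0 : ℕ) : ℝ) := by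
      simp only [invWeight, lt_add_one, if_true, posNat_insertLast_self,
        posNat_insertLast_of_lt σ p hX, hind]
      split_ifs <;> first | omega | simp
    simp only [h, mul_left_comm _ (relPosIndicator X Y r σ), ← mul_sum]
    rw [sum_insertLast_shift z (posNat σ X) (fun s => (s : ℝ))]
    simp only [invWeight, lt_irrefl, if_false, Nat.sub_self, invProb, shiftProb]
    push_cast
    field_simp
  · have h (p : Fin (k + 1)) : invWeight φ X Y z r (k + 1) (insertLast σ p) =
        relPosIndicator X Y r σ * invProb φ z (z - (k + 1))
          (posNat σ X + if (p : ℕ) ≤ posNat σ X then 1 else 0) := by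
      simp only [invWeight, not_lt.2 (Nat.succ_le_of_lt hkz), if_false, hind,
        posNat_insertLast_of_lt σ p hX]
    simp only [h, mul_left_comm _ (relPosIndicator X Y r σ), ← mul_sum]
    rw [sum_insertLast_shift k (posNat σ X) (fun s => invProb φ z (z - (k + 1)) (posNat σ X + s))]
    simp only [invWeight, not_lt.2 hkz.le, if_false, show z - k = z - (k + 1) + 1 by omega,
      invProb, shiftAvg, show z - (z - (k + 1) + 1) = k by omega]
    field_simp

end ConditionalWeights

section ConditionalProbability

variable {φ : ℝ} {X Y z r : ℕ}

lemma mallowsSum_invWeight (hφ : 0 ≤ φ) (hXY : X < Y) (hYz : Y ≤ z) {n : ℕ} (hYn : Y ≤ n) :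
    mallowsSum φ (invWeight φ X Y z r n) = (∏ t ∈ Ioc Y n, geomSum φ t) *
      (invProb φ z (z - Y) r * mallowsSum φ (relPosIndicator X Y r : Perm (Fin Y) → ℝ)) := by
  rw [mallowsSum_eq_prod_mul (invWeight φ X Y z r) hYn
    fun k hk _ σ => sum_insertLast_invWeight hφ hXY hk σ]
  congr 1
  simp only [mallowsSum, mul_sum]
  refine sum_congr rfl fun σ _ => ?_
  have hpos : relPosNat σ Y X = posNat σ X :=
    (relPosNat_size σ ⟨X, hXY⟩).trans (posNat_val σ ⟨X, hXY⟩).symm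
  simp only [invWeight, not_lt.2 hYz, if_false, relPosIndicator, hpos]
  split_ifs with h
  · rw [h]; ring
  · ring

lemma mallowsSum_relPosIndicator (hXY : X < Y) {n : ℕ} (hYn : Y ≤ n) :
    mallowsSum φ (relPosIndicator X Y r : Perm (Fin n) → ℝ) = (∏ t ∈ Ioc Y n, geomSum φ t) *
      mallowsSum φ (relPosIndicator X Y r : Perm (Fin Y) → ℝ) :=
  mallowsSum_eq_prod_mul (fun k => relPosIndicator X Y r) hYn
    fun _ hk _ σ => sum_insertLast_relPosIndicator (by omega) hk σ

lemma mallowsSum_relPosIndicator_pos (hφ : 0 < φ) (hXY : X < Y) (hr : r < Y) :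
    0 < mallowsSum φ (relPosIndicator X Y r : Perm (Fin Y) → ℝ) := by
  refine mallowsSum_pos_of_nonneg hφ (fun σ => by unfold relPosIndicator; split_ifs <;> norm_num)
    (σ := swap ⟨X, hXY⟩ ⟨r, hr⟩) ?_
  rw [relPosIndicator, relPosNat_size _ ⟨X, hXY⟩, symm_swap, swap_apply_left, if_pos rfl]
  exact one_pos

theorem mCondProb_eq_invProb (hφ : 0 < φ) {n : ℕ} {x y z : Fin n} (hxy : x < y) (hyz : y < z)
    {r : ℕ} (hr : r ≤ y) :
    mCondProb φ 1 (fun π => π.symm z < π.symm x) (fun π => relPos π (y + 1) x = r) =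
      invProb φ z (z - (y + 1)) r := by
  have hXY : (x : ℕ) < y + 1 := by have : (x : ℕ) < y := hxy; omega
  have hYz : (y : ℕ) + 1 ≤ z := hyz
  have hYn : (y : ℕ) + 1 ≤ n := by omega
  have hprod : 0 < ∏ t ∈ Ioc ((y : ℕ) + 1) n, geomSum φ t :=
    prod_pos fun t ht => geomSum_pos hφ.le (by have := (mem_Ioc.1 ht).1; omega)
  have hY := mallowsSum_relPosIndicator_pos (r := r) hφ hXY (by omega)
  rw [mCondProb_one_eq_div hφ.le (F := invWeight φ x (y + 1) z r n) (G := relPosIndicator x (y + 1) r)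
    (fun π => ?_) (fun π => ?_), mallowsSum_invWeight hφ.le hXY hYz hYn,
    mallowsSum_relPosIndicator hXY hYn]
  · field_simp
  · simp only [invWeight, z.is_lt, if_true, posNat_val, relPosIndicator,
      relPos_eq_relPosNat π hYn, Fin.lt_def]
    split_ifs <;> simp_all
  · simp only [relPosIndicator, relPos_eq_relPosNat π hYn]

end ConditionalProbability

lemma abs_mCondProb_sub_le_one {φ : ℝ} (hφ : 0 ≤ φ) {n : ℕ} (A B B' : Perm (Fin n) → Prop) :
    |mCondProb φ 1 A B - mCondProb φ 1 A B'| ≤ 1 := by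
  obtain ⟨h₁, h₂⟩ := mCondProb_mem_Icc hφ A B
  obtain ⟨h₃, h₄⟩ := mCondProb_mem_Icc hφ A B'
  rw [abs_sub_le_iff]
  constructor <;> linarith

lemma abs_mCondProb_sub_le {φ : ℝ} (hφ₀ : 0 < φ) (hφ₁ : φ < 1) {n : ℕ} {x y z : Fin n}
    (hxy : x < y) (hyz : y < z) (hzy : (z : ℝ) - y ≤ min ((y : ℝ) + 1) (1 / (1 - φ)))
    {r : ℕ} (hr : r < y) :
    |mCondProb φ 1 (fun π => π.symm z < π.symm x) (fun π => relPos π (y + 1) x = r) -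
      mCondProb φ 1 (fun π => π.symm z < π.symm x) (fun π => relPos π (y + 1) x = r + 1)| ≤
      18 * max (1 / ((z : ℝ) + 1)) (1 - φ) := by
  obtain ⟨hzy₁, hzy₂⟩ := le_min_iff.1 hzy
  have hyz' : (y : ℕ) < z := hyz
  have hdz : 2 * ((z : ℕ) - (y + 1)) ≤ z := by
    have : (z : ℕ) ≤ 2 * y + 1 := by exact_mod_cast (by linarith : (z : ℝ) ≤ 2 * y + 1)
    omega
  have hd : (((z : ℕ) - (y + 1) : ℕ) + 1 : ℝ) * (1 - φ) ≤ 1 := by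
    rw [Nat.cast_sub (by omega : (y : ℕ) + 1 ≤ z)]
    have := (le_div_iff₀ (by linarith : (0 : ℝ) < 1 - φ)).1 hzy₂
    push_cast
    linarith
  rw [mCondProb_eq_invProb hφ₀ hxy hyz hr.le, mCondProb_eq_invProb hφ₀ hxy hyz hr, abs_sub_comm]
  obtain ⟨hmono, hincr⟩ := invProb_incrBounded hφ₀.le hφ₁.le (Nat.sub_le (z : ℕ) (y + 1)) r
  rw [abs_of_nonneg (by linarith)]
  linarith [one_div_geomSum_mul_exp_le hφ₀.le hφ₁ hdz hd]

-- Elements are 0-indexed: the paper's `y` is `y.1 + 1`, and its positions `s`, `s + 1` among the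
-- first `y` elements are the values `s - 1`, `s` of `relPos`.
/-- Small change in the conditional inversion probability. There is a
universal constant `C` such that for elements `x < y < z` of `[n]` (represented 0-indexed,
so the paper's element `y` is `y.1 + 1`) with `z - y ≤ min(y, 1/(1-φ))`, and any `1 ≤ s < y`,
the conditional probabilities of `π⁻¹ x > π⁻¹ z` given that the (1-indexed) position of `x`
among the first `y` elements is `s`, respectively `s + 1`, differ by at most
`C max(1/z, 1 - φ)`. -/
theorem small_change :
    ∃ C : ℝ, 0 < C ∧
      ∀ (n : ℕ) (φ : ℝ), 0 ≤ φ → φ < 1 →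
        ∀ x y z : Fin n, x < y → y < z →
          (z.1 : ℝ) - (y.1 : ℝ) ≤ min ((y.1 : ℝ) + 1) (1 / (1 - φ)) →
          ∀ s : ℕ, 1 ≤ s → s < y.1 + 1 →
            |mCondProb φ 1 (fun π => π.symm z < π.symm x)
                (fun π => relPos π (y.1 + 1) x = s - 1) -
              mCondProb φ 1 (fun π => π.symm z < π.symm x)
                (fun π => relPos π (y.1 + 1) x = s)| ≤
              C * max (1 / ((z.1 : ℝ) + 1)) (1 - φ) := by
  refine ⟨18, by norm_num, fun n φ hφ₀ hφ₁ x y z hxy hyz hzy s hs hsy => ?_⟩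
  rcases hφ₀.eq_or_lt with rfl | hφ
  · -- the conditioning events may be null (and `0 / 0 = 0`), but here `1 - φ = 1`
    refine (abs_mCondProb_sub_le_one le_rfl _ _ _).trans ?_
    linarith [le_max_right (1 / ((z : ℝ) + 1)) (1 - 0)]
  · obtain ⟨r, rfl⟩ : ∃ r, s = r + 1 := ⟨s - 1, by omega⟩
    simpa using abs_mCondProb_sub_le hφ hφ₁ hxy hyz hzy (by omega : r < y)

end Mallows
end

section
/- For any permutation π of [n], the sum over t = 1 to n of (v_π^{←}[t] + v_π^{→}[t])² is at most 4·‖v_{id} − v_π‖². -/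
open scoped Classical
open Finset

namespace Mallows

/-!
Let `d t = π⁻¹ t - t` and let `L t`, `R t` be the sets counted by `v←[t]` and `v→[t]`.
Counting the elements placed before `t` and those smaller than `t` gives `|R t| - |L t| = d t`.
For `j ∈ L t` the numbers `π⁻¹ j - π⁻¹ t` and `t - j` are positive and injective in `j`, so
their sum `d j - d t` satisfies `|L t|² ≤ ∑_{j ∈ L t} (d j - d t)`; symmetrically for `R t`.
Since `j ∈ L t ↔ t ∈ R j`, the right-hand sides summed over `t` equal
`∑ j (|R j| - |L j|) d j + ∑ t d t² = 2 ∑ t d t²`, and `(a + b)² ≤ 2 (a² + b²)` gives the factor `4`.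
-/

theorem card_mul_card_add_one_le_two_mul_sum {ι : Type*} [DecidableEq ι] {s : Finset ι}
    {f : ι → ℤ} (hf : Set.InjOn f s) (hpos : ∀ i ∈ s, 0 < f i) :
    (#s * (#s + 1) : ℤ) ≤ 2 * ∑ i ∈ s, f i := by
  induction s using Finset.induction_on_max_value f with
  | empty => simp
  | insert a s ha hmax ih =>
    have hf' : Set.InjOn f s := hf.mono (by simp)
    -- `f` maps `insert a s` injectively into `[1, f a]`
    have hcard : (#s + 1 : ℤ) ≤ f a := by
      have hsub : (insert a s).image f ⊆ Icc 1 (f a) := by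
        intro x hx
        obtain ⟨i, hi, rfl⟩ := mem_image.1 hx
        rcases mem_insert.1 hi with rfl | hi
        · exact mem_Icc.2 ⟨hpos i (mem_insert_self i s), le_rfl⟩
        · exact mem_Icc.2 ⟨hpos i (mem_insert_of_mem hi), hmax i hi⟩
      have := card_le_card hsub
      rw [card_image_of_injOn hf, card_insert_of_notMem ha, Int.card_Icc] at this
      omega
    have := ih hf' fun i hi => hpos i (mem_insert_of_mem hi)
    rw [card_insert_of_notMem ha, sum_insert ha]
    push_cast
    nlinarith

theorem sq_card_le_sum_add {ι : Type*} [DecidableEq ι] {s : Finset ι} {f g : ι → ℤ}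
    (hf : Set.InjOn f s) (hg : Set.InjOn g s) (hf0 : ∀ i ∈ s, 0 < f i)
    (hg0 : ∀ i ∈ s, 0 < g i) :
    (#s : ℤ) ^ 2 ≤ ∑ i ∈ s, (f i + g i) := by
  have := card_mul_card_add_one_le_two_mul_sum hf hf0
  have := card_mul_card_add_one_le_two_mul_sum hg hg0
  rw [sum_add_distrib]
  nlinarith

section Displacement

variable {n : ℕ} (π : Equiv.Perm (Fin n))

def leftSet (t : Fin n) : Finset (Fin n) := {j | j < t ∧ π.symm t < π.symm j}

def rightSet (t : Fin n) : Finset (Fin n) := {j | t < j ∧ π.symm j < π.symm t}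

def displacement (t : Fin n) : ℤ := (π.symm t : ℕ) - (t : ℕ)

theorem leftAdj_one_apply (t : Fin n) : leftAdj 1 π t = #(leftSet π t) := rfl

theorem rightAdj_one_apply (t : Fin n) : rightAdj 1 π t = #(rightSet π t) := rfl

theorem norm_posVec_one_sub_posVec_sq :
    ‖posVec 1 - posVec π‖ ^ 2 = ∑ t, (displacement π t : ℝ) ^ 2 := by
  rw [EuclideanSpace.real_norm_sq_eq]
  refine sum_congr rfl fun t _ => ?_
  simp only [PiLp.sub_apply, posVec, displacement]
  push_cast
  simp only [pull_end, Equiv.refl_symm, Equiv.refl_apply]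
  ring

theorem card_filter_apply_lt (k : Fin n) : #{j | π j < k} = k := by
  rw [← Fin.card_Iio k, ← filter_gt_eq_Iio]
  exact card_equiv π (by simp)

theorem card_rightSet_sub_card_leftSet (t : Fin n) :
    (#(rightSet π t) : ℤ) - #(leftSet π t) = displacement π t := by
  set C : Finset (Fin n) := {j | j < t ∧ π.symm j < π.symm t}
  have hbefore : #{j | π.symm j < π.symm t} = #C + #(rightSet π t) := by
    rw [← card_union_of_disjoint (by simp only [C, rightSet, disjoint_left]; grind)]
    congr 1
    ext j
    simp only [C, rightSet, mem_filter, mem_union, mem_univ, true_and]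
    grind
  have hsmaller : #{j | j < t} = #C + #(leftSet π t) := by
    rw [← card_union_of_disjoint (by simp only [C, leftSet, disjoint_left]; grind)]
    congr 1
    ext j
    simp only [C, leftSet, mem_filter, mem_union, mem_univ, true_and]
    grind [Equiv.apply_eq_iff_eq]
  rw [card_filter_apply_lt] at hbefore
  rw [filter_gt_eq_Iio, Fin.card_Iio] at hsmaller
  simp only [displacement]
  omega

theorem sq_card_leftSet_le (t : Fin n) :
    (#(leftSet π t) : ℤ) ^ 2 ≤ ∑ j ∈ leftSet π t, (displacement π j - displacement π t) := by
  have split : ∀ j ∈ leftSet π t, displacement π j - displacement π t =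
      (((π.symm j : ℕ) : ℤ) - (π.symm t : ℕ)) + (((t : ℕ) : ℤ) - (j : ℕ)) := by
    intro j _
    simp only [displacement]
    ring
  rw [sum_congr rfl split]
  refine sq_card_le_sum_add (fun a _ b _ h => π.symm.injective (Fin.ext (by omega)))
    (fun a _ b _ h => Fin.ext (by omega)) (fun j hj => ?_) (fun j hj => ?_) <;>
  · simp only [leftSet, mem_filter, mem_univ, true_and, Fin.lt_def] at hj
    omega

theorem sq_card_rightSet_le (t : Fin n) :
    (#(rightSet π t) : ℤ) ^ 2 ≤ ∑ j ∈ rightSet π t, (displacement π t - displacement π j) := by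
  have split : ∀ j ∈ rightSet π t, displacement π t - displacement π j =
      (((π.symm t : ℕ) : ℤ) - (π.symm j : ℕ)) + (((j : ℕ) : ℤ) - (t : ℕ)) := by
    intro j _
    simp only [displacement]
    ring
  rw [sum_congr rfl split]
  refine sq_card_le_sum_add (fun a _ b _ h => π.symm.injective (Fin.ext (by omega)))
    (fun a _ b _ h => Fin.ext (by omega)) (fun j hj => ?_) (fun j hj => ?_) <;>
  · simp only [rightSet, mem_filter, mem_univ, true_and, Fin.lt_def] at hj
    omega

theorem sum_sum_leftSet {M : Type*} [AddCommMonoid M] (f : Fin n → M) :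
    ∑ t, ∑ j ∈ leftSet π t, f j = ∑ j, #(rightSet π j) • f j := by
  rw [sum_comm' (t' := univ) (s' := rightSet π) (by simp [leftSet, rightSet])]
  simp only [sum_const]

theorem sum_sum_rightSet {M : Type*} [AddCommMonoid M] (f : Fin n → M) :
    ∑ t, ∑ j ∈ rightSet π t, f j = ∑ j, #(leftSet π j) • f j := by
  rw [sum_comm' (t' := univ) (s' := leftSet π) (by simp [leftSet, rightSet])]
  simp only [sum_const]

theorem sum_sum_leftSet_sub_sum_rightSet :
    ∑ t, (∑ j ∈ leftSet π t, displacement π j - ∑ j ∈ rightSet π t, displacement π j) =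
      ∑ t, displacement π t ^ 2 := by
  rw [sum_sub_distrib, sum_sum_leftSet, sum_sum_rightSet, ← sum_sub_distrib]
  refine sum_congr rfl fun j _ => ?_
  rw [nsmul_eq_mul, nsmul_eq_mul, ← sub_mul, card_rightSet_sub_card_leftSet, sq]

theorem sq_card_leftSet_add_sq_card_rightSet_le (t : Fin n) :
    (#(leftSet π t) : ℤ) ^ 2 + (#(rightSet π t) : ℤ) ^ 2 ≤
      ∑ j ∈ leftSet π t, displacement π j - ∑ j ∈ rightSet π t, displacement π j +
        displacement π t ^ 2 := by
  have hL := sq_card_leftSet_le π t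
  have hR := sq_card_rightSet_le π t
  rw [sum_sub_distrib, sum_const, nsmul_eq_mul] at hL hR
  have hbal : displacement π t ^ 2 = (#(rightSet π t) - #(leftSet π t)) * displacement π t := by
    rw [card_rightSet_sub_card_leftSet, sq]
  linarith

theorem sum_sq_card_leftSet_add_card_rightSet_le :
    ∑ t, ((#(leftSet π t) : ℤ) + #(rightSet π t)) ^ 2 ≤ 4 * ∑ t, displacement π t ^ 2 :=
  calc ∑ t, ((#(leftSet π t) : ℤ) + #(rightSet π t)) ^ 2
      ≤ ∑ t, 2 * (∑ j ∈ leftSet π t, displacement π j - ∑ j ∈ rightSet π t, displacement π j +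
          displacement π t ^ 2) := sum_le_sum fun t _ => by
        nlinarith [sq_card_leftSet_add_sq_card_rightSet_le π t,
          sq_nonneg ((#(leftSet π t) : ℤ) - #(rightSet π t))]
    _ = 4 * ∑ t, displacement π t ^ 2 := by
      rw [← mul_sum, sum_add_distrib, sum_sum_leftSet_sub_sum_rightSet]
      ring

end Displacement

/-- Adjustment-vector bound. For any permutation `π` of `[n]`,
`∑ t (v_π^{←}[t] + v_π^{→}[t])² ≤ 4 ‖v_id - v_π‖²`. -/
theorem adjustment_sum_bound (n : ℕ) (π : Equiv.Perm (Fin n)) :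
    ∑ t : Fin n, (leftAdj 1 π t + rightAdj 1 π t) ^ 2 ≤ 4 * ‖posVec 1 - posVec π‖ ^ 2 := by
  simp only [leftAdj_one_apply, rightAdj_one_apply, norm_posVec_one_sub_posVec_sq]
  exact_mod_cast sum_sq_card_leftSet_add_card_rightSet_le π

end Mallows
end
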